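/- Let P be a finite set of at least two points in a metric space and let c ∈ P. Define σ = min_{x'∈P} Σ_{x∈P} d(x, x') and δ = min_{y∈P, y≠c} d(y, c). If m is a natural number with m·δ > Σ_{x∈P} d(x, c) − σ, then for every y ∈ P with y ≠ c, Σ_{x∈P} d(x, c) < Σ_{x∈P} d(x, y) + m·d(c, y); that is, c is the unique 1-median medoid of the multiset obtained from P by adding m extra copies of c. -/

import Mathlib

open Finset

/-- **Per-cluster copy-forcing estimate (strict).**
Let `P` be a finite set of at least two points of a metric space, `c ∈ P`,
`σ = min_{x' ∈ P} Σ_{x ∈ P} d(x, x')` and `δ = min_{y ∈ P, y ≠ c} d(y, c)`.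
If `m·δ > Σ_{x ∈ P} d(x, c) - σ`, then for every `y ∈ P` with `y ≠ c`,
`Σ_{x ∈ P} d(x, c) < Σ_{x ∈ P} d(x, y) + m·d(c, y)`: `c` is the unique 1-median medoid
of the multiset obtained from `P` by adding `m` extra copies of `c`. -/
theorem copy_forcing_unique_medoid {α : Type*} [MetricSpace α] [DecidableEq α]
    (P : Finset α) (hP : 2 ≤ P.card) (c : α) (hc : c ∈ P)
    (σ δ : ℝ)
    (hσ : σ = P.inf' (Finset.card_pos.mp (by omega)) (fun x' => ∑ x ∈ P, dist x x'))
    (hδ : δ = (P.erase c).inf'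
      (Finset.card_pos.mp (by rw [Finset.card_erase_of_mem hc]; omega))
      (fun y => dist y c))
    (m : ℕ) (hm : (∑ x ∈ P, dist x c) - σ < (m : ℝ) * δ) :
    ∀ y ∈ P, y ≠ c →
      (∑ x ∈ P, dist x c) < (∑ x ∈ P, dist x y) + (m : ℝ) * dist c y := by
  intro y hy hyc
  have hσ_le : σ ≤ ∑ x ∈ P, dist x y := hσ ▸ P.inf'_le _ hy
  have hδ_le : δ ≤ dist c y := by
    rw [hδ, dist_comm]
    exact (P.erase c).inf'_le _ (mem_erase.mpr ⟨hyc, hy⟩)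
  calc ∑ x ∈ P, dist x c < σ + m * δ := by linarith
    _ ≤ ∑ x ∈ P, dist x y + m * dist c y := add_le_add hσ_le (by gcongr)
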